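/- Let g ∈ L²(Ω), let α₁, α₂ > 0, and define E(u,α) := ‖u − g‖_{L²(Ω)}² + α·TV(u). If u_{α_i} minimizes E(·,α_i) over {u ∈ L²(Ω) : TV(u) < ∞} for i = 1,2, then ‖u_{α₁} − u_{α₂}‖_{L²(Ω)}² ≤ ((α₂ − α₁)/(α₁ + α₂))·(‖u_{α₂} − g‖_{L²(Ω)}² − ‖u_{α₁} − g‖_{L²(Ω)}²). -/

import Mathlib

/-! Since `TV` is convex, a minimizer `u` of `‖v - g‖² + α TV(v)` satisfies the variational
inequality `α (TV u - TV w) ≤ 2 ⟪u - g, w - u⟫` for every `w` of finite total variation. Applying it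
to `u_{α₁}` with `w = u_{α₂}` and vice versa, and adding the two inequalities with weights `α₂` and
`α₁`, eliminates the total variations; what remains is an inequality between inner products which,
expanded via `‖a - b‖² = ‖a‖² - 2 ⟪a, b⟫ + ‖b‖²`, is the claimed estimate. -/

open MeasureTheory Filter
open scoped ENNReal NNReal

noncomputable section

abbrev E2 : Type := EuclideanSpace ℝ (Fin 2)

abbrev μΩ (Ω : Set E2) : Measure E2 := MeasureTheory.volume.restrict Ω

abbrev LpΩ (Ω : Set E2) := Lp ℝ 2 (μΩ Ω)

/-- Discrete divergence of a C¹ vector field. -/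
def divg (ξ : E2 → E2) (x : E2) : ℝ :=
  ∑ i : Fin 2, fderiv ℝ ξ x (EuclideanSpace.single i 1) i

/-- Admissible test vector fields for the total variation. -/
def IsTestField (Ω : Set E2) (ξ : E2 → E2) : Prop :=
  ContDiff ℝ 1 ξ ∧ HasCompactSupport ξ ∧ tsupport ξ ⊆ Ω ∧ ∀ x, ‖ξ x‖ ≤ 1

/-- Total variation of `u ∈ L²(Ω)` (valued in `ℝ≥0∞`). -/
def TV (Ω : Set E2) (u : LpΩ Ω) : ℝ≥0∞ :=
  ⨆ ξ : {ξ : E2 → E2 // IsTestField Ω ξ},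
    ENNReal.ofReal (∫ x, u x * divg ξ.1 x ∂(μΩ Ω))

/-- Fidelity term `H_τ(u;g) = (1/τ)‖Tu - g‖_{L^τ}^τ`. -/
def Hfid (Ω : Set E2) (τ : ℕ) (T : LpΩ Ω →L[ℝ] LpΩ Ω) (g u : LpΩ Ω) : ℝ :=
  (1 / (τ : ℝ)) * ∫ x, |(T u - g : LpΩ Ω) x| ^ τ ∂(μΩ Ω)

/-- The functional `J_τ(u,α) = H_τ(u;g) + α · TV(u)` (valued in `ℝ≥0∞`). -/
def Jfun (Ω : Set E2) (τ : ℕ) (T : LpΩ Ω →L[ℝ] LpΩ Ω) (g : LpΩ Ω) (α : ℝ)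
    (u : LpΩ Ω) : ℝ≥0∞ :=
  ENNReal.ofReal (Hfid Ω τ T g u) + ENNReal.ofReal α * TV Ω u

/-- The mean value `g_Ω` of `g` over `Ω`. -/
def meanG (Ω : Set E2) (g : LpΩ Ω) : ℝ :=
  (∫ x, g x ∂(μΩ Ω)) / (MeasureTheory.volume Ω).toReal

/-- `‖g - g_Ω‖_{L^τ(Ω)}^τ`. -/
def gMeanDist (Ω : Set E2) (τ : ℕ) (g : LpΩ Ω) : ℝ :=
  ∫ x, |g x - meanG Ω g| ^ τ ∂(μΩ Ω)

/-- `B_τ = (ν_τ/τ)|Ω|`. -/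
def Bval (Ω : Set E2) (τ : ℕ) (ν : ℝ) : ℝ :=
  (ν / (τ : ℝ)) * (MeasureTheory.volume Ω).toReal

/-- `o` represents the constant function `1_Ω` in `L²(Ω)`. -/
def IsOneFun (Ω : Set E2) (o : LpΩ Ω) : Prop :=
  ∀ᵐ x ∂(μΩ Ω), o x = 1

/-- `u` minimizes `J_τ(·,α)` over `{TV < ∞}`. -/
def IsJMin (Ω : Set E2) (τ : ℕ) (T : LpΩ Ω →L[ℝ] LpΩ Ω) (g : LpΩ Ω) (α : ℝ)
    (u : LpΩ Ω) : Prop :=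
  TV Ω u < ⊤ ∧ ∀ v, TV Ω v < ⊤ → Jfun Ω τ T g α u ≤ Jfun Ω τ T g α v

/-- The denoising energy `E(u,α) = ‖u-g‖²_{L²} + α·TV(u)` (valued in `ℝ≥0∞`). -/
def Efun (Ω : Set E2) (g : LpΩ Ω) (α : ℝ) (u : LpΩ Ω) : ℝ≥0∞ :=
  ENNReal.ofReal (‖u - g‖ ^ 2) + ENNReal.ofReal α * TV Ω u

open scoped RealInnerProductSpace Topology

section InnerProductSpace

variable {H : Type*} [NormedAddCommGroup H] [InnerProductSpace ℝ H]

/- Compare `u` with `u + t • (w - u)`: after dividing by `t`, the quadratic term leaves an error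
`t * ‖w - u‖ ^ 2`, which vanishes as `t → 0⁺`. -/
lemma ConvexOn.sub_le_two_inner_of_isMinOn {s : Set H} {f : H → ℝ} (hf : ConvexOn ℝ s f)
    {g u w : H} (hu : u ∈ s) (hw : w ∈ s) (hmin : IsMinOn (fun v => ‖v - g‖ ^ 2 + f v) s u) :
    f u - f w ≤ 2 * ⟪u - g, w - u⟫ := by
  have hstep : ∀ t : ℝ, 0 < t → t ≤ 1 → f u - f w ≤ 2 * ⟪u - g, w - u⟫ + t * ‖w - u‖ ^ 2 := by
    intro t ht₀ ht₁
    have hseg : u + t • (w - u) = (1 - t) • u + t • w := by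
      rw [smul_sub, sub_smul, one_smul]; abel
    have hconv : f (u + t • (w - u)) ≤ (1 - t) * f u + t * f w := by
      rw [hseg]; exact hf.2 hu hw (by linarith) ht₀.le (by ring)
    have hnorm : ‖u + t • (w - u) - g‖ ^ 2
        = ‖u - g‖ ^ 2 + t * (2 * ⟪u - g, w - u⟫) + t ^ 2 * ‖w - u‖ ^ 2 := by
      rw [add_sub_right_comm, norm_add_sq_real, real_inner_smul_right, norm_smul,
        Real.norm_of_nonneg ht₀.le]
      ring
    have hle : ‖u - g‖ ^ 2 + f u ≤ ‖u + t • (w - u) - g‖ ^ 2 + f (u + t • (w - u)) :=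
      hmin (hf.1.add_smul_sub_mem hu hw ⟨ht₀.le, ht₁⟩)
    refine le_of_mul_le_mul_left ?_ ht₀
    nlinarith
  have hlim : Tendsto (fun t : ℝ => 2 * ⟪u - g, w - u⟫ + t * ‖w - u‖ ^ 2) (𝓝[>] 0)
      (𝓝 (2 * ⟪u - g, w - u⟫)) := by
    refine tendsto_nhdsWithin_of_tendsto_nhds ?_
    have hcont : Continuous fun t : ℝ => 2 * ⟪u - g, w - u⟫ + t * ‖w - u‖ ^ 2 := by fun_prop
    simpa using hcont.tendsto 0
  refine ge_of_tendsto hlim ?_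
  filter_upwards [Ioo_mem_nhdsGT one_pos] with t ht using hstep t ht.1 ht.2.le

theorem ConvexOn.norm_sub_sq_le_of_isMinOn {s : Set H} {R : H → ℝ} (hR : ConvexOn ℝ s R)
    {g u₁ u₂ : H} {α₁ α₂ : ℝ} (hα₁ : 0 < α₁) (hα₂ : 0 < α₂) (hu₁ : u₁ ∈ s) (hu₂ : u₂ ∈ s)
    (hmin₁ : IsMinOn (fun v => ‖v - g‖ ^ 2 + α₁ * R v) s u₁)
    (hmin₂ : IsMinOn (fun v => ‖v - g‖ ^ 2 + α₂ * R v) s u₂) :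
    ‖u₁ - u₂‖ ^ 2 ≤ ((α₂ - α₁) / (α₁ + α₂)) * (‖u₂ - g‖ ^ 2 - ‖u₁ - g‖ ^ 2) := by
  have h₁ := (hR.smul hα₁.le).sub_le_two_inner_of_isMinOn hu₁ hu₂ hmin₁
  have h₂ := (hR.smul hα₂.le).sub_le_two_inner_of_isMinOn hu₂ hu₁ hmin₂
  simp only [smul_eq_mul] at h₁ h₂
  rw [← sub_sub_sub_cancel_right u₂ u₁ g, inner_sub_right, real_inner_self_eq_norm_sq] at h₁
  rw [← sub_sub_sub_cancel_right u₁ u₂ g, inner_sub_right, real_inner_self_eq_norm_sq,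
    real_inner_comm] at h₂
  rw [← sub_sub_sub_cancel_right u₁ u₂ g, norm_sub_sq_real, div_mul_eq_mul_div,
    le_div_iff₀ (by linarith)]
  nlinarith

end InnerProductSpace

section TotalVariation

variable {Ω : Set E2}

lemma continuous_divg {ξ : E2 → E2} (hξ : ContDiff ℝ 1 ξ) : Continuous (divg ξ) :=
  continuous_finsetSum _ fun i _ => (EuclideanSpace.proj i).continuous.comp
    ((hξ.continuous_fderiv one_ne_zero).clm_apply continuous_const)

lemma HasCompactSupport.divg {ξ : E2 → E2} (hξ : HasCompactSupport ξ) :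
    HasCompactSupport (divg ξ) :=
  (hξ.fderiv (𝕜 := ℝ)).comp_left
    (g := fun L : E2 →L[ℝ] E2 => ∑ i : Fin 2, L (EuclideanSpace.single i 1) i) (by simp)

lemma IsTestField.integrable_mul_divg (u : LpΩ Ω) {ξ : E2 → E2} (hξ : IsTestField Ω ξ) :
    Integrable (fun x => u x * divg ξ x) (μΩ Ω) :=
  (Lp.memLp u).integrable_mul
    ((continuous_divg hξ.1).memLp_of_hasCompactSupport (p := 2) hξ.2.1.divg)

lemma TV_smul_add_smul_le (u w : LpΩ Ω) {a b : ℝ} (ha : 0 ≤ a) (hb : 0 ≤ b) :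
    TV Ω (a • u + b • w) ≤ ENNReal.ofReal a * TV Ω u + ENNReal.ofReal b * TV Ω w := by
  refine iSup_le fun ξ => ?_
  have hcoe : (a • u + b • w : LpΩ Ω) =ᵐ[μΩ Ω] fun x => a * u x + b * w x := by
    filter_upwards [Lp.coeFn_add (a • u) (b • w), Lp.coeFn_smul a u, Lp.coeFn_smul b w]
      with x hsum hu hw
    rw [hsum, Pi.add_apply, hu, hw, Pi.smul_apply, Pi.smul_apply, smul_eq_mul, smul_eq_mul]
  have hint : ∫ x, (a • u + b • w : LpΩ Ω) x * divg ξ.1 x ∂(μΩ Ω)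
      = a * ∫ x, u x * divg ξ.1 x ∂(μΩ Ω) + b * ∫ x, w x * divg ξ.1 x ∂(μΩ Ω) := by
    rw [integral_congr_ae (g := fun x => a * (u x * divg ξ.1 x) + b * (w x * divg ξ.1 x))
        (by filter_upwards [hcoe] with x hx; rw [hx]; ring),
      integral_add ((ξ.2.integrable_mul_divg u).const_mul a)
        ((ξ.2.integrable_mul_divg w).const_mul b), integral_const_mul, integral_const_mul]
  calc ENNReal.ofReal (∫ x, (a • u + b • w : LpΩ Ω) x * divg ξ.1 x ∂(μΩ Ω))
      ≤ ENNReal.ofReal a * ENNReal.ofReal (∫ x, u x * divg ξ.1 x ∂(μΩ Ω))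
        + ENNReal.ofReal b * ENNReal.ofReal (∫ x, w x * divg ξ.1 x ∂(μΩ Ω)) := by
        rw [hint, ← ENNReal.ofReal_mul ha, ← ENNReal.ofReal_mul hb]
        exact ENNReal.ofReal_add_le
    _ ≤ ENNReal.ofReal a * TV Ω u + ENNReal.ofReal b * TV Ω w := by
        gcongr
        exacts [le_iSup_of_le ξ le_rfl, le_iSup_of_le ξ le_rfl]

lemma convexOn_toReal_TV : ConvexOn ℝ {u | TV Ω u < ⊤} fun u => (TV Ω u).toReal := by
  refine ⟨fun u hu w hw a b ha hb _ => ?_, fun u hu w hw a b ha hb _ => ?_⟩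
  · exact (TV_smul_add_smul_le u w ha hb).trans_lt (by finiteness)
  · refine ENNReal.toReal_le_of_le_ofReal (by positivity)
      ((TV_smul_add_smul_le u w ha hb).trans ?_)
    simp only [smul_eq_mul]
    rw [ENNReal.ofReal_add (by positivity) (by positivity), ENNReal.ofReal_mul ha,
      ENNReal.ofReal_mul hb, ENNReal.ofReal_toReal hu.ne, ENNReal.ofReal_toReal hw.ne]

lemma Efun_eq_ofReal (g : LpΩ Ω) {α : ℝ} (hα : 0 ≤ α) {u : LpΩ Ω} (hu : TV Ω u < ⊤) :
    Efun Ω g α u = ENNReal.ofReal (‖u - g‖ ^ 2 + α * (TV Ω u).toReal) := by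
  rw [Efun, ENNReal.ofReal_add (by positivity) (by positivity), ENNReal.ofReal_mul hα,
    ENNReal.ofReal_toReal hu.ne]

lemma isMinOn_of_forall_Efun_le {g u : LpΩ Ω} {α : ℝ} (hα : 0 ≤ α) (hu : TV Ω u < ⊤)
    (hmin : ∀ v, TV Ω v < ⊤ → Efun Ω g α u ≤ Efun Ω g α v) :
    IsMinOn (fun v => ‖v - g‖ ^ 2 + α * (TV Ω v).toReal) {v | TV Ω v < ⊤} u := fun v hv => by
  have := hmin v hv
  rwa [Efun_eq_ofReal g hα hu, Efun_eq_ofReal g hα hv,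
    ENNReal.ofReal_le_ofReal_iff (by positivity)] at this

end TotalVariation

theorem stmt4_general (Ω : Set E2)
    (g : LpΩ Ω) (α₁ α₂ : ℝ) (hα₁ : 0 < α₁) (hα₂ : 0 < α₂)
    (u₁ u₂ : LpΩ Ω)
    (hu₁ : TV Ω u₁ < ⊤ ∧ ∀ v, TV Ω v < ⊤ → Efun Ω g α₁ u₁ ≤ Efun Ω g α₁ v)
    (hu₂ : TV Ω u₂ < ⊤ ∧ ∀ v, TV Ω v < ⊤ → Efun Ω g α₂ u₂ ≤ Efun Ω g α₂ v) :
    ‖u₁ - u₂‖ ^ 2 ≤ ((α₂ - α₁) / (α₁ + α₂)) * (‖u₂ - g‖ ^ 2 - ‖u₁ - g‖ ^ 2) :=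
  convexOn_toReal_TV.norm_sub_sq_le_of_isMinOn hα₁ hα₂ hu₁.1 hu₂.1
    (isMinOn_of_forall_Efun_le hα₁.le hu₁.1 hu₁.2) (isMinOn_of_forall_Efun_le hα₂.le hu₂.1 hu₂.2)

/-- Stability estimate for minimizers of the denoising energy. -/
theorem stmt4 (Ω : Set E2) (hΩo : IsOpen Ω) (hΩb : Bornology.IsBounded Ω)
    (hΩpos : 0 < MeasureTheory.volume Ω)
    (g : LpΩ Ω) (α₁ α₂ : ℝ) (hα₁ : 0 < α₁) (hα₂ : 0 < α₂)
    (u₁ u₂ : LpΩ Ω)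
    (hu₁ : TV Ω u₁ < ⊤ ∧ ∀ v, TV Ω v < ⊤ → Efun Ω g α₁ u₁ ≤ Efun Ω g α₁ v)
    (hu₂ : TV Ω u₂ < ⊤ ∧ ∀ v, TV Ω v < ⊤ → Efun Ω g α₂ u₂ ≤ Efun Ω g α₂ v) :
    ‖u₁ - u₂‖ ^ 2 ≤ ((α₂ - α₁) / (α₁ + α₂)) * (‖u₂ - g‖ ^ 2 - ‖u₁ - g‖ ^ 2) :=
  stmt4_general Ω g α₁ α₂ hα₁ hα₂ u₁ u₂ hu₁ hu₂

end
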